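/- For the function U(ρ,θ) = (ρ^{1/2} cos(θ/2))^{2s} in Cartesian coordinates τ = ρ cos θ, η = ρ sin θ (with θ ∈ (-π,π)), the second derivative in τ satisfies |U_{ττ}| ≤ (2/ρ) U_τ at every point with ρ > 0. -/

import Mathlib

open Real Set

/-!
By the half-angle formula `√ρ cos(θ/2) = √((ρ + τ)/2)`, so `U = ((ρ + τ)/2)^s` on the whole
plane. Since `∂τ (ρ + τ) = (ρ + τ)/ρ`, this gives `U_τ = s U / ρ`, and differentiating once more,
`U_ττ = (s - τ/ρ) U_τ / ρ`. Off the negative `τ`-axis `U_τ > 0`, and `|s - τ/ρ| ≤ 1 + s ≤ 2`.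
-/

/-- The function `U(τ,η) = (ρ^{1/2} cos(θ/2))^{2s}` in Cartesian coordinates, where
`ρ = √(τ²+η²)` and `θ = arg(τ + iη)`. -/
noncomputable def Ucart (s τ η : ℝ) : ℝ :=
  (Real.sqrt (Real.sqrt (τ ^ 2 + η ^ 2)) *
    Real.cos (Complex.arg ⟨τ, η⟩ / 2)) ^ (2 * s)

namespace Complex

lemma norm_mk (x y : ℝ) : ‖(⟨x, y⟩ : ℂ)‖ = √(x ^ 2 + y ^ 2) := by
  rw [norm_def, normSq_mk, sq, sq]

lemma sqrt_norm_mul_cos_arg_div_two (z : ℂ) :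
    √‖z‖ * Real.cos (arg z / 2) = √((‖z‖ + z.re) / 2) := by
  rw [cos_half (neg_pi_lt_arg z).le (arg_le_pi z), ← sqrt_mul (norm_nonneg z), mul_div_assoc',
    mul_add, mul_one, norm_mul_cos_arg]

lemma norm_add_re_pos {z : ℂ} (hz : z ∈ slitPlane) : 0 < ‖z‖ + z.re := by
  rcases mem_slitPlane_iff.1 hz with hre | him
  · linarith [norm_nonneg z]
  · have hlt : |z.re| < ‖z‖ := (abs_re_le_norm z).lt_of_ne (mt abs_re_eq_norm.1 him)
    linarith [neg_abs_le z.re]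

end Complex

lemma abs_le_sqrt_sq_add_sq (τ η : ℝ) : |τ| ≤ √(τ ^ 2 + η ^ 2) :=
  abs_le_sqrt (le_add_of_nonneg_right (sq_nonneg η))

lemma Ucart_eq_rpow (s τ η : ℝ) : Ucart s τ η = ((√(τ ^ 2 + η ^ 2) + τ) / 2) ^ s := by
  have hbase : 0 ≤ (√(τ ^ 2 + η ^ 2) + τ) / 2 := by
    linarith [neg_abs_le τ, abs_le_sqrt_sq_add_sq τ η]
  rw [Ucart, ← Complex.norm_mk, Complex.sqrt_norm_mul_cos_arg_div_two, Complex.norm_mk,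
    ← rpow_div_two_eq_sqrt _ hbase, mul_div_cancel_left₀ s two_ne_zero]

section Derivatives

variable {η τ : ℝ}

lemma hasDerivAt_sqrt_sq_add_sq (hρ : 0 < √(τ ^ 2 + η ^ 2)) :
    HasDerivAt (fun t ↦ √(t ^ 2 + η ^ 2)) (τ / √(τ ^ 2 + η ^ 2)) τ := by
  have hsq : HasDerivAt (fun t ↦ t ^ 2 + η ^ 2) (2 * τ) τ := by
    simpa using (hasDerivAt_pow 2 τ).add_const (η ^ 2)
  convert hsq.sqrt (sqrt_pos.1 hρ).ne' using 1
  field_simp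

lemma hasDerivAt_sqrt_sq_add_sq_add_self_div_two (hρ : 0 < √(τ ^ 2 + η ^ 2)) :
    HasDerivAt (fun t ↦ (√(t ^ 2 + η ^ 2) + t) / 2)
      ((√(τ ^ 2 + η ^ 2) + τ) / 2 / √(τ ^ 2 + η ^ 2)) τ := by
  refine (((hasDerivAt_sqrt_sq_add_sq hρ).add (hasDerivAt_id' τ)).div_const 2).congr_deriv ?_
  field_simp
  ring

lemma sqrt_sq_add_sq_pos (h : 0 < √(τ ^ 2 + η ^ 2) + τ) : 0 < √(τ ^ 2 + η ^ 2) := by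
  linarith [le_abs_self τ, abs_le_sqrt_sq_add_sq τ η]

variable {s : ℝ}

lemma hasDerivAt_Ucart (h : 0 < √(τ ^ 2 + η ^ 2) + τ) :
    HasDerivAt (fun t ↦ Ucart s t η) (s * Ucart s τ η / √(τ ^ 2 + η ^ 2)) τ := by
  simp_rw [Ucart_eq_rpow]
  convert (hasDerivAt_sqrt_sq_add_sq_add_self_div_two (sqrt_sq_add_sq_pos h)).rpow_const (p := s)
    (Or.inl (by positivity)) using 1
  rw [rpow_sub_one (by positivity)]
  field_simp

lemma hasDerivAt_deriv_Ucart (h : 0 < √(τ ^ 2 + η ^ 2) + τ) :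
    HasDerivAt (fun t ↦ deriv (fun t' ↦ Ucart s t' η) t)
      (s * Ucart s τ η * (s - τ / √(τ ^ 2 + η ^ 2)) / √(τ ^ 2 + η ^ 2) ^ 2) τ := by
  have hρ := sqrt_sq_add_sq_pos h
  have hopen : IsOpen {t : ℝ | 0 < √(t ^ 2 + η ^ 2) + t} :=
    isOpen_lt continuous_const (by fun_prop)
  have hderiv : (fun t ↦ deriv (fun t' ↦ Ucart s t' η) t)
      =ᶠ[nhds τ] fun t ↦ s * Ucart s t η / √(t ^ 2 + η ^ 2) :=
    Filter.eventually_of_mem (hopen.mem_nhds h) fun t ht ↦ (hasDerivAt_Ucart ht).deriv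
  refine HasDerivAt.congr_of_eventuallyEq ?_ hderiv
  refine (((hasDerivAt_Ucart (s := s) h).const_mul s).div (hasDerivAt_sqrt_sq_add_sq hρ)
    hρ.ne').congr_deriv ?_
  field_simp

end Derivatives

/-- At every point with `ρ > 0` and `θ ∈ (-π, π)`, the second τ-derivative
of `U` satisfies `|U_{ττ}| ≤ (2/ρ) U_τ`. -/
theorem stmt_2 (s : ℝ) (hs : s ∈ Set.Ioo (0:ℝ) 1) (τ η : ℝ)
    (hρ : 0 < Real.sqrt (τ ^ 2 + η ^ 2))
    (hθ : Complex.arg ⟨τ, η⟩ ∈ Set.Ioo (-Real.pi) Real.pi) :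
    |deriv (fun t : ℝ => deriv (fun t' : ℝ => Ucart s t' η) t) τ|
      ≤ (2 / Real.sqrt (τ ^ 2 + η ^ 2)) * deriv (fun t : ℝ => Ucart s t η) τ := by
  set ρ := √(τ ^ 2 + η ^ 2)
  have hslit : (⟨τ, η⟩ : ℂ) ∈ Complex.slitPlane :=
    Complex.mem_slitPlane_iff_arg.2 ⟨hθ.2.ne, norm_pos_iff.1 (Complex.norm_mk τ η ▸ hρ)⟩
  have h : 0 < ρ + τ := by simpa [Complex.norm_mk] using Complex.norm_add_re_pos hslit
  rw [(hasDerivAt_deriv_Ucart h).deriv, (hasDerivAt_Ucart h).deriv]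
  have hsU : 0 < s * Ucart s τ η := mul_pos hs.1 (by rw [Ucart_eq_rpow]; positivity)
  have hratio : |s - τ / ρ| ≤ 2 := by
    have hτ : |τ / ρ| ≤ 1 := by
      rw [abs_div, abs_of_pos hρ]
      exact div_le_one_of_le₀ (abs_le_sqrt_sq_add_sq τ η) hρ.le
    linarith [abs_sub s (τ / ρ), abs_of_pos hs.1, hs.2]
  calc |s * Ucart s τ η * (s - τ / ρ) / ρ ^ 2|
      = s * Ucart s τ η / ρ * |s - τ / ρ| / ρ := by
        rw [abs_div, abs_mul, abs_of_pos hsU, abs_of_pos (pow_pos hρ 2)]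
        ring
    _ ≤ s * Ucart s τ η / ρ * 2 / ρ := by gcongr
    _ = 2 / ρ * (s * Ucart s τ η / ρ) := by ring
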